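/- arXiv:2210.00692 — 5 statements merged into one kernel-verified Lean document; each statement's English description precedes it below -/
import Mathlib

section
/- Suppose M = 2 and the grand sum condition grandsum(w) + 2b = 0 holds. Then the shallow CNN log-wavefunction possesses the relabeling symmetry: for every balanced state s, lnψ(Ls) = lnψ(s), where L is the relabeling operator. -/
open Finset

/-- The window preactivation of a shallow CNN with cyclic padding. -/
def preact (N K M : ℕ) [NeZero N] (w : Fin K → Fin M → ℝ) (b : ℝ)
    (s : ZMod N → Fin M) (i : ZMod N) : ℝ :=
  (∑ j : Fin K, w j (s (i + (j.val : ZMod N)))) + b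

/-- The log-wavefunction of a shallow ReLU CNN with cyclic padding. -/
def lnPsi (N K M : ℕ) [NeZero N] (w : Fin K → Fin M → ℝ) (b v : ℝ)
    (s : ZMod N → Fin M) : ℝ :=
  v * ∑ i : ZMod N, max (preact N K M w b s i) 0

/-- A balanced state attains every symbol at exactly `N / M` indices. -/
def IsBalanced (N M : ℕ) [NeZero N] (s : ZMod N → Fin M) : Prop :=
  ∀ a : Fin M, (Finset.univ.filter (fun i : ZMod N => s i = a)).card = N / M

/-!
For `M = 2`, relabeling `a ↦ 1 - a` replaces `w j a` by `w j 0 + w j 1 - w j a`, so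
every preactivation becomes `grandsum(w) + 2b - pᵢ = -pᵢ`. Since `max (-p) 0 = max p 0 - p`, the
log-wavefunction changes by `-v ∑ᵢ pᵢ`. On a balanced state each symbol occurs `N / 2` times in
every (shifted) window column, so `∑ᵢ pᵢ = (N / 2) (grandsum(w) + 2b) = 0`.
-/

theorem Fin.apply_one_sub {β : Type*} [AddCommGroup β] (f : Fin 2 → β) (a : Fin 2) :
    f (1 - a) = ∑ x, f x - f a := by
  fin_cases a <;> simp [Fin.sum_univ_two]

namespace IsBalanced

variable {N M : ℕ} [NeZero N] {s : ZMod N → Fin M}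

theorem sum_comp {β : Type*} [AddCommMonoid β] (hs : IsBalanced N M s) (f : Fin M → β) :
    ∑ i, f (s i) = (N / M) • ∑ a, f a := by
  rw [← Finset.sum_fiberwise univ s (fun i => f (s i)), Finset.smul_sum]
  refine Finset.sum_congr rfl fun a _ => ?_
  rw [Finset.sum_congr rfl fun i hi => congrArg f (Finset.mem_filter.mp hi).2, Finset.sum_const,
    hs a]

theorem mul_div_cancel (hs : IsBalanced N M s) : M * (N / M) = N := by
  have h := hs.sum_comp fun _ => (1 : ℕ)
  simp only [Finset.sum_const, Finset.card_univ, ZMod.card, Fintype.card_fin, smul_eq_mul,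
    mul_one] at h
  exact (mul_comm _ _).trans h.symm

end IsBalanced

theorem preact_one_sub {N K : ℕ} [NeZero N] (w : Fin K → Fin 2 → ℝ) (b : ℝ)
    (s : ZMod N → Fin 2) (i : ZMod N) :
    preact N K 2 w b (fun i => 1 - s i) i =
      (∑ j, ∑ a, w j a) + 2 * b - preact N K 2 w b s i := by
  simp only [preact, Fin.apply_one_sub (w _), Finset.sum_sub_distrib]
  ring

section CNN

variable {N K M : ℕ} [NeZero N] (w : Fin K → Fin M → ℝ) (b : ℝ)

theorem sum_preact_of_isBalanced {s : ZMod N → Fin M} (hs : IsBalanced N M s) :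
    ∑ i, preact N K M w b s i = (N / M : ℕ) * ((∑ j, ∑ a, w j a) + M * b) := by
  have hshift (j : Fin K) : ∑ i : ZMod N, w j (s (i + (j.val : ZMod N))) = ∑ i, w j (s i) :=
    Equiv.sum_comp (Equiv.addRight (j.val : ZMod N)) fun i => w j (s i)
  have hN : (N : ℝ) = M * (N / M : ℕ) := by exact_mod_cast hs.mul_div_cancel.symm
  simp only [preact, Finset.sum_add_distrib, Finset.sum_const, Finset.card_univ, ZMod.card]
  rw [Finset.sum_comm]
  simp only [hshift, hs.sum_comp, nsmul_eq_mul, ← Finset.mul_sum, hN]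
  ring

theorem lnPsi_eq_of_preact_eq_neg (v : ℝ) {s t : ZMod N → Fin M}
    (hneg : ∀ i, preact N K M w b t i = -preact N K M w b s i)
    (hsum : ∑ i, preact N K M w b s i = 0) :
    lnPsi N K M w b v t = lnPsi N K M w b v s := by
  have hrelu (x : ℝ) : max (-x) 0 = max x 0 - x := by
    linarith [max_zero_sub_max_neg_zero_eq_self x]
  simp only [lnPsi, hneg, hrelu, Finset.sum_sub_distrib, hsum, sub_zero]

end CNN

theorem cnn_relabeling_symmetry_general
    (N K : ℕ) [NeZero N]
    (w : Fin K → Fin 2 → ℝ) (b v : ℝ)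
    (hgs : (∑ j : Fin K, ∑ a : Fin 2, w j a) + 2 * b = 0)
    (s : ZMod N → Fin 2) (hbal : IsBalanced N 2 s) :
    lnPsi N K 2 w b v (fun i => 1 - s i) = lnPsi N K 2 w b v s := by
  refine lnPsi_eq_of_preact_eq_neg w b v (fun i => ?_) ?_
  · rw [preact_one_sub, hgs, zero_sub]
  · rw [sum_preact_of_isBalanced w b hbal]
    exact_mod_cast mul_eq_zero_of_right _ hgs

/-- for `M = 2`, under the grand sum condition
`grandsum(w) + 2b = 0`, the shallow CNN log-wavefunction has the relabeling
symmetry on every balanced state. -/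
theorem cnn_relabeling_symmetry
    (N K : ℕ) [NeZero N] (hM : (2 : ℕ) ∣ N) (hK : K ≤ N)
    (w : Fin K → Fin 2 → ℝ) (b v : ℝ)
    (hgs : (∑ j : Fin K, ∑ a : Fin 2, w j a) + 2 * b = 0)
    (s : ZMod N → Fin 2) (hbal : IsBalanced N 2 s) :
    lnPsi N K 2 w b v (fun i => 1 - s i) = lnPsi N K 2 w b v s :=
  cnn_relabeling_symmetry_general N K w b v hgs s hbal
end

section
/- Suppose M = 2 and the grand sum condition grandsum(w) + 2b = 0 holds. Let s be a balanced state for which there exists k ∈ ZMod N with (T^k (L s)) = R s, where T is cyclic translation, L is relabeling, and R is reflection. Then lnψ(R s) = lnψ(s). -/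
/-!
Relabeling sends each preactivation `p` to `grandsum(w) + 2b - p = -p`, and
`max (-p) 0 = max p 0 - p`. On a balanced state the preactivations sum to
`(N/2) (grandsum(w) + 2b) = 0`, so relabeling preserves `lnψ`; so does translation,
hence `lnψ (R s) = lnψ (T^k (L s)) = lnψ s`.
-/

open Finset

/-- Cyclic translation by `k`. -/
def cycTranslate (N M : ℕ) [NeZero N] (k : ZMod N) (s : ZMod N → Fin M) :
    ZMod N → Fin M :=
  fun i => s (i + k)

/-- Relabeling (label switching) operator for `M = 2`. -/
def relabel (N : ℕ) [NeZero N] (s : ZMod N → Fin 2) : ZMod N → Fin 2 :=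
  fun i => 1 - s i

/-- Reflection operator. -/
def reflect (N M : ℕ) [NeZero N] (s : ZMod N → Fin M) : ZMod N → Fin M :=
  fun i => s (-i)

variable {N K M : ℕ} [NeZero N]

lemma lnPsi_cycTranslate (w : Fin K → Fin M → ℝ) (b v : ℝ) (k : ZMod N)
    (s : ZMod N → Fin M) :
    lnPsi N K M w b v (cycTranslate N M k s) = lnPsi N K M w b v s := by
  unfold lnPsi
  congr 1
  refine Fintype.sum_equiv (Equiv.addRight k) _ _ fun i => ?_
  simp only [preact, cycTranslate, Equiv.coe_addRight, add_right_comm]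

lemma IsBalanced.sum_comp_s1 {s : ZMod N → Fin M} (hs : IsBalanced N M s) (f : Fin M → ℝ) :
    ∑ i, f (s i) = (N / M : ℕ) * ∑ a, f a := by
  rw [← sum_fiberwise' univ s f, mul_sum]
  refine sum_congr rfl fun a _ => ?_
  rw [sum_const, hs a, nsmul_eq_mul]

lemma IsBalanced.sum_preact {s : ZMod N → Fin M} (hs : IsBalanced N M s) (hM : M ∣ N)
    (w : Fin K → Fin M → ℝ) (b : ℝ) :
    ∑ i, preact N K M w b s i = (N / M : ℕ) * ((∑ j, ∑ a, w j a) + M * b) := by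
  have hwindow : ∀ j : Fin K, ∑ i, w j (s (i + (j.val : ZMod N))) = ∑ i, w j (s i) :=
    fun j => Fintype.sum_equiv (Equiv.addRight _) _ _ fun _ => rfl
  have hN : (N : ℝ) = (N / M : ℕ) * M := by exact_mod_cast (Nat.div_mul_cancel hM).symm
  simp only [preact, sum_add_distrib, sum_const, card_univ, ZMod.card,
    nsmul_eq_mul]
  rw [sum_comm, sum_congr rfl fun j _ => (hwindow j).trans (hs.sum_comp_s1 (w j)),
    ← mul_sum, hN]
  ring

lemma preact_relabel_add_preact (w : Fin K → Fin 2 → ℝ) (b : ℝ) (s : ZMod N → Fin 2)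
    (i : ZMod N) :
    preact N K 2 w b (relabel N s) i + preact N K 2 w b s i = (∑ j, ∑ a, w j a) + 2 * b := by
  have hpair : ∀ (j : Fin K) (a : Fin 2), w j (1 - a) + w j a = ∑ a', w j a' := by
    intro j a
    fin_cases a <;> simp [Fin.sum_univ_two, add_comm]
  unfold preact relabel
  rw [add_add_add_comm, ← sum_add_distrib, sum_congr rfl fun j _ => hpair j _]
  ring

lemma lnPsi_relabel (hM : 2 ∣ N) (w : Fin K → Fin 2 → ℝ) (b v : ℝ)
    (hgs : (∑ j, ∑ a, w j a) + 2 * b = 0) {s : ZMod N → Fin 2} (hs : IsBalanced N 2 s) :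
    lnPsi N K 2 w b v (relabel N s) = lnPsi N K 2 w b v s := by
  have hneg : ∀ i, preact N K 2 w b (relabel N s) i = -preact N K 2 w b s i := fun i => by
    linarith [preact_relabel_add_preact w b s i]
  have hsum : ∑ i, preact N K 2 w b s i = 0 := by
    rw [hs.sum_preact hM, Nat.cast_ofNat, hgs, mul_zero]
  unfold lnPsi
  congr 1
  calc ∑ i, max (preact N K 2 w b (relabel N s) i) 0
      = ∑ i, (max (preact N K 2 w b s i) 0 - preact N K 2 w b s i) := by
        refine sum_congr rfl fun i _ => ?_
        rw [hneg]
        linarith [max_zero_sub_max_neg_zero_eq_self (preact N K 2 w b s i)]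
    _ = ∑ i, max (preact N K 2 w b s i) 0 := by
        rw [sum_sub_distrib, hsum, sub_zero]

theorem cnn_reflection_symmetry_general
    (N K : ℕ) [NeZero N] (hM : (2 : ℕ) ∣ N)
    (w : Fin K → Fin 2 → ℝ) (b v : ℝ)
    (hgs : (∑ j : Fin K, ∑ a : Fin 2, w j a) + 2 * b = 0)
    (s : ZMod N → Fin 2) (hbal : IsBalanced N 2 s)
    (hrefl : ∃ k : ZMod N, cycTranslate N 2 k (relabel N s) = reflect N 2 s) :
    lnPsi N K 2 w b v (reflect N 2 s) = lnPsi N K 2 w b v s := by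
  obtain ⟨k, hk⟩ := hrefl
  rw [← hk, lnPsi_cycTranslate, lnPsi_relabel hM w b v hgs hbal]

/-- for `M = 2`, under the grand sum condition, any balanced
state whose reflection is a cycTranslate of its relabeling has the reflection
symmetry of the CNN log-wavefunction. -/
theorem cnn_reflection_symmetry
    (N K : ℕ) [NeZero N] (hM : (2 : ℕ) ∣ N) (hK : K ≤ N)
    (w : Fin K → Fin 2 → ℝ) (b v : ℝ)
    (hgs : (∑ j : Fin K, ∑ a : Fin 2, w j a) + 2 * b = 0)
    (s : ZMod N → Fin 2) (hbal : IsBalanced N 2 s)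
    (hrefl : ∃ k : ZMod N, cycTranslate N 2 k (relabel N s) = reflect N 2 s) :
    lnPsi N K 2 w b v (reflect N 2 s) = lnPsi N K 2 w b v s :=
  cnn_reflection_symmetry_general N K hM w b v hgs s hbal hrefl
end

section
/- If the shallow CNN uses a linear (identity) activation function, then its output is the same constant on every balanced input state: for every balanced state s : ZMod N → Fin M, v · ∑_{i ∈ ZMod N} p_i(s) = v · N · (grandsum(w) / M + b), a value independent of s. -/
open Finset

/-- The grand sum of a convolutional filter. -/
def grandSum (K M : ℕ) (w : Fin K → Fin M → ℝ) : ℝ :=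
  ∑ j : Fin K, ∑ a : Fin M, w j a

/-! Summing over all windows, each filter tap `j` reads the state through the translation
`i ↦ i + j` of `ZMod N`, a bijection, so it sees every symbol exactly `N / M` times on a
balanced state: the window sums add up to `(N / M) · grandSum w`, whatever the state. -/

theorem sum_comp_eq_nsmul_sum_of_card_fiber {ι α β : Type*} [Fintype ι] [Fintype α]
    [DecidableEq α] [AddCommMonoid β] (s : ι → α) (c : ℕ)
    (hs : ∀ a, #{i | s i = a} = c) (f : α → β) :
    ∑ i, f (s i) = c • ∑ a, f a := by
  rw [← Finset.sum_fiberwise univ s, Finset.smul_sum]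
  refine Finset.sum_congr rfl fun a _ => ?_
  rw [Finset.sum_congr rfl fun i hi => congrArg f (Finset.mem_filter.mp hi).2,
    Finset.sum_const, hs a]

theorem sum_sum_comp_add_eq_nsmul_grandSum {G : Type*} [Fintype G] [AddGroup G]
    {K M : ℕ} (w : Fin K → Fin M → ℝ) (shift : Fin K → G) (s : G → Fin M) (c : ℕ)
    (hs : ∀ a, #{i | s i = a} = c) :
    ∑ i, ∑ j, w j (s (i + shift j)) = c • grandSum K M w := by
  rw [Finset.sum_comm, grandSum, Finset.smul_sum]
  refine Finset.sum_congr rfl fun j _ => ?_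
  rw [← sum_comp_eq_nsmul_sum_of_card_fiber s c hs]
  exact Equiv.sum_comp (Equiv.addRight (shift j)) (fun i => w j (s i))

theorem cnn_linear_activation_constant_general
    (N K M : ℕ) [NeZero N] (hMN : M ∣ N)
    (w : Fin K → Fin M → ℝ) (b v : ℝ)
    (s : ZMod N → Fin M) (hbal : IsBalanced N M s) :
    v * (∑ i : ZMod N, preact N K M w b s i)
      = v * (N : ℝ) * (grandSum K M w / (M : ℝ) + b) := by
  have hwindows := sum_sum_comp_add_eq_nsmul_grandSum w (fun j => (j.val : ZMod N))
    s (N / M) hbal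
  simp only [preact, Finset.sum_add_distrib, hwindows, nsmul_eq_mul,
    Nat.cast_div_charZero hMN, Finset.sum_const, Finset.card_univ, ZMod.card]
  ring

/-- a shallow CNN with linear (identity) activation outputs the
constant `v · N · (grandsum(w) / M + b)` on every balanced state. -/
theorem cnn_linear_activation_constant
    (N K M : ℕ) [NeZero N] (hM : 0 < M) (hMN : M ∣ N) (hK : K ≤ N)
    (w : Fin K → Fin M → ℝ) (b v : ℝ)
    (s : ZMod N → Fin M) (hbal : IsBalanced N M s) :
    v * (∑ i : ZMod N, preact N K M w b s i)
      = v * (N : ℝ) * (grandSum K M w / (M : ℝ) + b) :=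
  cnn_linear_activation_constant_general N K M hMN w b v s hbal
end

section
/- The CNN log-wavefunction admits a motif-count decomposition: for every state s : ZMod N → Fin M, lnψ(s) = v · ∑_{m' : Fin K → Fin M} max(q(m'), 0) · m_{m'}(s), where the sum ranges over all M^K K-motifs, q(m') is the motif preactivation, and m_{m'}(s) is the number of cyclic occurrences of motif m' in s. -/
/-! The preactivation at site `i` depends on `s` only through the motif read in the window at `i`,
so grouping the sites of the sum defining `lnPsi` by that motif turns it into a sum over motifs
weighted by their occurrence counts. -/

open Finset

/-- The number of cyclic occurrences of the `K`-motif `m'` in the state `s`. -/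
def motifCount (N K M : ℕ) [NeZero N] (m' : Fin K → Fin M)
    (s : ZMod N → Fin M) : ℕ :=
  (Finset.univ.filter
    (fun i : ZMod N => ∀ j : Fin K, s (i + (j.val : ZMod N)) = m' j)).card

/-- The motif preactivation of a `K`-motif. -/
def motifPreact (K M : ℕ) (w : Fin K → Fin M → ℝ) (b : ℝ)
    (m' : Fin K → Fin M) : ℝ :=
  (∑ j : Fin K, w j (m' j)) + b

theorem Fintype.sum_comp_eq_sum_mul_card_fiber {ι κ R : Type*} [Fintype ι] [Fintype κ]
    [DecidableEq κ] [NonAssocSemiring R] (g : ι → κ) (f : κ → R) :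
    ∑ i, f (g i) = ∑ j, f j * (#{i | g i = j} : R) := by
  simp only [← Finset.sum_fiberwise' univ g f, sum_const, nsmul_eq_mul']

section Window

variable (N K M : ℕ) [NeZero N] (s : ZMod N → Fin M)

def window (i : ZMod N) : Fin K → Fin M :=
  fun j => s (i + (j.val : ZMod N))

lemma preact_eq_motifPreact_window (w : Fin K → Fin M → ℝ) (b : ℝ) (i : ZMod N) :
    preact N K M w b s i = motifPreact K M w b (window N K M s i) :=
  rfl

lemma motifCount_eq_card_window_eq (m' : Fin K → Fin M) :
    motifCount N K M m' s = #{i | window N K M s i = m'} := by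
  simp only [motifCount, window, funext_iff]

end Window

theorem cnn_motif_decomposition_general
    (N K M : ℕ) [NeZero N]
    (w : Fin K → Fin M → ℝ) (b v : ℝ) (s : ZMod N → Fin M) :
    lnPsi N K M w b v s
      = v * ∑ m' : Fin K → Fin M,
          max (motifPreact K M w b m') 0 * (motifCount N K M m' s : ℝ) := by
  simp only [lnPsi, preact_eq_motifPreact_window, motifCount_eq_card_window_eq]
  exact congrArg (v * ·) <|
    Fintype.sum_comp_eq_sum_mul_card_fiber (window N K M s) (max (motifPreact K M w b ·) 0)

/-- the CNN log-wavefunction decomposes over motif counts. -/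
theorem cnn_motif_decomposition
    (N K M : ℕ) [NeZero N] (hM : 0 < M) (hMN : M ∣ N) (hK : K ≤ N)
    (w : Fin K → Fin M → ℝ) (b v : ℝ) (s : ZMod N → Fin M) :
    lnPsi N K M w b v s
      = v * ∑ m' : Fin K → Fin M,
          max (motifPreact K M w b m') 0 * (motifCount N K M m' s : ℝ) :=
  cnn_motif_decomposition_general N K M w b v s
end

section
/- Motif-count ambiguity for small kernels (the construction showing K* > K for K < N/3): let K ≥ 1, let A be a word of length K − 1 over the alphabet Fin M, and let x, y, z be nonempty words over Fin M such that the total length of the cyclic concatenations equals N, i.e. 3(K−1) + |x| + |y| + |z| = N. Then the two cyclic states s₁ = A·x·A·y·A·z and s₂ = A·y·A·x·A·z (read cyclically around ZMod N) have identical K-motif count vectors: m_{m'}(s₁) = m_{m'}(s₂) for every K-motif m' : Fin K → Fin M. -/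
open Finset

/-- The cyclic state determined by a list of length `N`. -/
def listToState (N M : ℕ) [NeZero N] (l : List (Fin M)) (hl : l.length = N) :
    ZMod N → Fin M :=
  fun i => l.get ⟨i.val, by rw [hl]; exact ZMod.val_lt i⟩

/-!
Cut the cyclic word into the blocks `A·x`, `A·y`, `A·z`. An occurrence of a `K`-motif that
starts inside a block reads at most `K - 1` letters past the end of that block, and these letters
are `A` whichever block comes next, since every block begins with `A`. Hence the motif count is a
sum of contributions of the individual blocks, each computed in the word `block·A`, and it does
not change when the blocks are permuted.
-/

namespace List

variable {α : Type*}

theorem IsPrefix.getElem?_eq {A R : List α} (h : A <+: R) {k : ℕ} (hk : k < A.length) :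
    R[k]? = A[k]? := by
  obtain ⟨t, rfl⟩ := h
  exact getElem?_append_left hk

theorem getElem?_append_eq_of_prefix {A R : List α} (h : A <+: R) (B : List α) {k : ℕ}
    (hk : k < B.length + A.length) : (B ++ R)[k]? = (B ++ A)[k]? := by
  by_cases hkB : k < B.length
  · rw [getElem?_append_left hkB, getElem?_append_left hkB]
  · rw [getElem?_append_right (by omega), getElem?_append_right (by omega),
      h.getElem?_eq (by omega)]

theorem getElem?_mod_length_of_prefix {A L : List α} (h : A <+: L) {k : ℕ}
    (hk : k < L.length + A.length) : L[k % L.length]? = (L ++ A)[k]? := by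
  by_cases hkL : k < L.length
  · rw [Nat.mod_eq_of_lt hkL, getElem?_append_left hkL]
  · have hAL := h.length_le
    rw [Nat.mod_eq_sub_mod (by omega), Nat.mod_eq_of_lt (by omega),
      getElem?_append_right (by omega), h.getElem?_eq (by omega)]

theorem prefix_flatten {A : List α} {Bs : List (List α)} (hBs : ∀ B ∈ Bs, A <+: B)
    (hne : Bs ≠ []) : A <+: Bs.flatten := by
  obtain ⟨B, Bs, rfl⟩ := exists_cons_of_ne_nil hne
  exact (hBs B mem_cons_self).trans (prefix_append _ _)

theorem prefix_flatten_append {A : List α} {Bs : List (List α)} (hBs : ∀ B ∈ Bs, A <+: B) :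
    A <+: Bs.flatten ++ A := by
  rcases eq_or_ne Bs [] with rfl | hne
  · simp
  · exact (prefix_flatten hBs hne).trans (prefix_append _ _)

end List

theorem ZMod.card_filter_val (N : ℕ) [NeZero N] (P : ℕ → Prop) [DecidablePred P] :
    #{i : ZMod N | P i.val} = #{n ∈ range N | P n} := by
  refine card_nbij' ZMod.val (fun n => (n : ZMod N)) (fun i hi => ?_) (fun n hn => ?_)
    (fun i _ => ZMod.natCast_zmod_val i) (fun n hn => ZMod.val_natCast_of_lt ?_)
  · simp_all [ZMod.val_lt]
  · simp_all [Nat.mod_eq_of_lt]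
  · simp_all

section LinearMotifCount

variable {α : Type*} [DecidableEq α] {K : ℕ}

def linearMotifCount (E : List α) (m : Fin K → α) (n : ℕ) : ℕ :=
  #{i ∈ range n | ∀ j : Fin K, E[i + j.val]? = some (m j)}

/-- An occurrence starting in `B` reads at most `K - 1` letters of `R`, and these are fixed
by `A`. -/
theorem linearMotifCount_append {A R : List α} (hA : A <+: R) (hK : K ≤ A.length + 1)
    (B : List α) (m : Fin K → α) (n : ℕ) :
    linearMotifCount (B ++ R) m (B.length + n) =
      linearMotifCount (B ++ A) m B.length + linearMotifCount R m n := by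
  simp only [linearMotifCount, card_filter, sum_range_add]
  congr 1
  · refine sum_congr rfl fun i hi => ?_
    have hwindow : ∀ j : Fin K, (B ++ R)[i + j]? = (B ++ A)[i + j]? := fun j =>
      List.getElem?_append_eq_of_prefix hA B (by rw [mem_range] at hi; omega)
    simp only [hwindow]
  · refine sum_congr rfl fun i _ => ?_
    simp only [add_assoc, List.getElem?_append_right (Nat.le_add_right _ _),
      Nat.add_sub_cancel_left]

theorem linearMotifCount_flatten {A : List α} (hK : K ≤ A.length + 1) (m : Fin K → α) :
    ∀ {Bs : List (List α)}, (∀ B ∈ Bs, A <+: B) →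
      linearMotifCount (Bs.flatten ++ A) m Bs.flatten.length =
        (Bs.map fun B => linearMotifCount (B ++ A) m B.length).sum
  | [], _ => by simp [linearMotifCount]
  | B :: Bs, hBs => by
    have hBs' : ∀ C ∈ Bs, A <+: C := fun C hC => hBs C (List.mem_cons_of_mem B hC)
    rw [List.flatten_cons, List.length_append, List.append_assoc,
      linearMotifCount_append (List.prefix_flatten_append hBs') hK,
      linearMotifCount_flatten hK m hBs', List.map_cons, List.sum_cons]

end LinearMotifCount

theorem some_listToState_add_natCast {N M : ℕ} [NeZero N] {A L : List (Fin M)} (hA : A <+: L)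
    (h : L.length = N) (i : ZMod N) {j : ℕ} (hj : j ≤ A.length) :
    some (listToState N M L h (i + j)) = (L ++ A)[i.val + j]? := by
  have hi := i.val_lt
  calc some (listToState N M L h (i + j)) = L[(i + j : ZMod N).val]? := by
        simp [listToState]
    _ = L[(i.val + j) % L.length]? := by rw [ZMod.val_add, ZMod.val_natCast, Nat.add_mod_mod, h]
    _ = (L ++ A)[i.val + j]? := List.getElem?_mod_length_of_prefix hA (by omega)

theorem motifCount_listToState {N M K : ℕ} [NeZero N] {A L : List (Fin M)} (hA : A <+: L)
    (hK : K ≤ A.length + 1) (h : L.length = N) (m : Fin K → Fin M) :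
    motifCount N K M m (listToState N M L h) = linearMotifCount (L ++ A) m L.length := by
  have hocc : ∀ i : ZMod N, (∀ j : Fin K, listToState N M L h (i + (j.val : ZMod N)) = m j) ↔
      ∀ j : Fin K, (L ++ A)[i.val + j]? = some (m j) := fun i =>
    forall_congr' fun j => by
      rw [← some_listToState_add_natCast hA h i (by omega), Option.some_inj]
  rw [motifCount, linearMotifCount, h]
  simp only [hocc]
  exact ZMod.card_filter_val N fun n => ∀ j : Fin K, (L ++ A)[n + j.val]? = some (m j)

theorem motifCount_eq_of_perm {N M K : ℕ} [NeZero N] {A L₁ L₂ : List (Fin M)}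
    {Bs Cs : List (List (Fin M))} (hL₁ : L₁ = Bs.flatten) (hL₂ : L₂ = Cs.flatten)
    (hp : Bs.Perm Cs) (hBs : ∀ B ∈ Bs, A <+: B) (hK : K ≤ A.length + 1)
    (h₁ : L₁.length = N) (h₂ : L₂.length = N) (m : Fin K → Fin M) :
    motifCount N K M m (listToState N M L₁ h₁) = motifCount N K M m (listToState N M L₂ h₂) := by
  subst hL₁ hL₂
  have hBs_ne : Bs ≠ [] := by
    rintro rfl
    exact NeZero.ne N (by simpa using h₁.symm)
  have hCs_ne : Cs ≠ [] := by
    rintro rfl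
    exact hBs_ne hp.eq_nil
  have hCs : ∀ C ∈ Cs, A <+: C := fun C hC => hBs C (hp.mem_iff.2 hC)
  rw [motifCount_listToState (List.prefix_flatten hBs hBs_ne) hK,
    motifCount_listToState (List.prefix_flatten hCs hCs_ne) hK,
    linearMotifCount_flatten hK m hBs, linearMotifCount_flatten hK m hCs]
  exact (hp.map _).sum_eq

theorem motif_count_ambiguity_general
    (N M K : ℕ) [NeZero N]
    (A x y z : List (Fin M))
    (hA : A.length = K - 1)
    (h1 : (A ++ x ++ A ++ y ++ A ++ z).length = N)
    (h2 : (A ++ y ++ A ++ x ++ A ++ z).length = N)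
    (m' : Fin K → Fin M) :
    motifCount N K M m' (listToState N M (A ++ x ++ A ++ y ++ A ++ z) h1)
      = motifCount N K M m' (listToState N M (A ++ y ++ A ++ x ++ A ++ z) h2) :=
  motifCount_eq_of_perm (A := A) (Bs := [A ++ x, A ++ y, A ++ z]) (Cs := [A ++ y, A ++ x, A ++ z])
    (by simp) (by simp) (List.Perm.swap _ _ _) (by simp) (by omega) h1 h2 m'

/-- if `A` is a word of length `K − 1` and `x, y, z` are
nonempty words with `3(K−1) + |x| + |y| + |z| = N`, then the cyclic states
`A·x·A·y·A·z` and `A·y·A·x·A·z` have identical `K`-motif count vectors. -/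
theorem motif_count_ambiguity
    (N M K : ℕ) [NeZero N] (hK : 1 ≤ K) (hKN : K ≤ N)
    (A x y z : List (Fin M))
    (hA : A.length = K - 1)
    (hx : x ≠ []) (hy : y ≠ []) (hz : z ≠ [])
    (hlen : 3 * (K - 1) + x.length + y.length + z.length = N)
    (h1 : (A ++ x ++ A ++ y ++ A ++ z).length = N)
    (h2 : (A ++ y ++ A ++ x ++ A ++ z).length = N)
    (m' : Fin K → Fin M) :
    motifCount N K M m' (listToState N M (A ++ x ++ A ++ y ++ A ++ z) h1)
      = motifCount N K M m' (listToState N M (A ++ y ++ A ++ x ++ A ++ z) h2) :=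
  motif_count_ambiguity_general N M K A x y z hA h1 h2 m'
end
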